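/- Let γ > 0, let R ≥ 600·(γ^{3/4} + γ^{−3/4}), and let j be an integer with 1 ≤ j ≤ M_R := ⌊(1/(32π))·γR²/log R⌋. If w ∈ F_j satisfies w = G_{j,R}(w), then −γ/2 ≤ Im(w²) ≤ 0; equivalently, γ/2 ≤ Im(w² + iγ) ≤ γ, so that w² + iγ lies in the open upper half-plane. -/

import Mathlib

/-- The argument in `[-π, π)`: it agrees with the principal argument `Complex.arg`
except on the negative real axis, where it takes the value `-π`. -/
noncomputable def argm (ζ : ℂ) : ℝ :=
  if Complex.arg ζ = Real.pi then -Real.pi else Complex.arg ζ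

/-- The branch `sq₋` of the square root with branch cut along the negative real axis:
`sq₋(ζ) = √|ζ|·exp(i·arg₋(ζ)/2)`. -/
noncomputable def sqm (ζ : ℂ) : ℂ :=
  (Real.sqrt ‖ζ‖ : ℂ) * Complex.exp (Complex.I * (argm ζ) / 2)

/-- The closed sector `F_∞ = {w : Re w ≤ 0 ≤ Im w, |Re w| ≥ 2·Im w}`. -/
def Finf : Set ℂ := {w : ℂ | w.re ≤ 0 ∧ 0 ≤ w.im ∧ 2 * w.im ≤ |w.re|}

/-- `h(w) = (sq₋(w² + iγ) − w)/(sq₋(w² + iγ) + w)`. -/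
noncomputable def hfun (γ : ℝ) (w : ℂ) : ℂ :=
  (sqm (w ^ 2 + Complex.I * γ) - w) / (sqm (w ^ 2 + Complex.I * γ) + w)

/-- `A(w) = log|h(w)|`. -/
noncomputable def Afun (γ : ℝ) (w : ℂ) : ℝ := Real.log ‖hfun γ w‖

/-- `B_j(w) = arg₋(h(w)) + 2πj`. -/
noncomputable def Bfun (γ : ℝ) (j : ℤ) (w : ℂ) : ℝ := argm (hfun γ w) + 2 * Real.pi * j

/-- `G_{j,R}(w) = (−B_j(w) + i·A(w))/(2R)`. -/
noncomputable def Gfun (γ : ℝ) (j : ℤ) (R : ℝ) (w : ℂ) : ℂ :=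
  (-(Bfun γ j w : ℂ) + Complex.I * (Afun γ w : ℂ)) / (2 * (R : ℂ))

/-- `F_j = {w ∈ F_∞ : B_j(w) ≥ 2·|A(w)|}`. -/
noncomputable def Fj (γ : ℝ) (j : ℤ) : Set ℂ :=
  {w ∈ Finf | 2 * |Afun γ w| ≤ Bfun γ j w}

/-! The fixed-point equation reads `2R·w = -B + iA` with `A = A(w)`, `B = B_j(w)`, so
`Im(w²) = -AB/(2R²)` and the claim amounts to `AB ≤ γR²`, the sign `Im(w²) ≤ 0` being that of the
sector `F_∞`. On `F_j` we have `0 ≤ A ≤ B/2`, and `j ≤ M_R` gives `B ≤ π + γR²/(16 log R)`.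
Since `(sq₋ - w)(sq₋ + w) = iγ`, `|h(w)| = |sq₋ - w|²/γ ≤ 4|w|²/γ + 2 = (A² + B²)/(γR²) + 2`, which
is at most `γR²`; hence `A ≤ log(γR²) ≤ 4 log R` and `AB ≤ 4π log R + γR²/4 ≤ γR²`. -/

section SquareRoot

variable {s w c : ℂ}

lemma sub_ne_zero_of_sq_eq (hc : c ≠ 0) (hs : s ^ 2 = w ^ 2 + c) : s - w ≠ 0 :=
  fun h => hc (by linear_combination -hs + (s + w) * h)

lemma norm_sub_div_add_of_sq_eq (hc : c ≠ 0) (hs : s ^ 2 = w ^ 2 + c) :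
    ‖(s - w) / (s + w)‖ = ‖s - w‖ ^ 2 / ‖c‖ := by
  have hprod : (s - w) * (s + w) = c := by linear_combination hs
  rw [← hprod, norm_div, norm_mul]
  field_simp [norm_ne_zero_iff.mpr (sub_ne_zero_of_sq_eq hc hs)]

lemma norm_sub_sq_le_of_sq_eq (hs : s ^ 2 = w ^ 2 + c) :
    ‖s - w‖ ^ 2 ≤ 4 * ‖w‖ ^ 2 + 2 * ‖c‖ := by
  have hsc : ‖s‖ ^ 2 ≤ ‖w‖ ^ 2 + ‖c‖ := by
    rw [← norm_pow, hs, ← norm_pow]; exact norm_add_le _ _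
  have hsub : ‖s - w‖ ≤ ‖s‖ + ‖w‖ := norm_sub_le s w
  nlinarith [norm_nonneg (s - w), sq_nonneg (‖s‖ - ‖w‖)]

end SquareRoot

lemma log_le_two_mul_div {c x : ℝ} (hc : 0 < c) (hcx : c ^ 2 ≤ x) :
    Real.log x ≤ 2 * x / c := by
  have hx : 0 ≤ x := (sq_nonneg c).trans hcx
  have hsqrt : c ≤ √x := Real.le_sqrt_of_sq_le hcx
  rw [le_div_iff₀ hc]
  calc Real.log x * c = 2 * Real.log √x * c := by rw [Real.log_sqrt hx]; ring
    _ ≤ 2 * √x * √x := by gcongr; exact Real.log_le_self (Real.sqrt_nonneg x)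
    _ = 2 * x := by rw [mul_assoc, Real.mul_self_sqrt hx]

lemma argm_le_pi (ζ : ℂ) : argm ζ ≤ Real.pi := by
  unfold argm
  split_ifs
  · linarith [Real.pi_pos]
  · exact Complex.arg_le_pi ζ

lemma Bfun_le (γ : ℝ) (j : ℤ) (w : ℂ) : Bfun γ j w ≤ Real.pi + 2 * Real.pi * j := by
  rw [Bfun]; linarith [argm_le_pi (hfun γ w)]

lemma sqm_sq (ζ : ℂ) : sqm ζ ^ 2 = ζ := by
  have hexp : Complex.exp (Complex.I * argm ζ) = Complex.exp (ζ.arg * Complex.I) := by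
    unfold argm
    split_ifs with h
    · rw [h, show Complex.I * ((-Real.pi : ℝ) : ℂ) = -(Real.pi * Complex.I) by push_cast; ring,
        Complex.exp_neg, Complex.exp_pi_mul_I]
      norm_num
    · rw [mul_comm]
  calc sqm ζ ^ 2 = ((Real.sqrt ‖ζ‖ ^ 2 : ℝ) : ℂ) * Complex.exp (Complex.I * argm ζ) := by
        rw [sqm, mul_pow, ← Complex.exp_nat_mul]; push_cast; ring_nf
    _ = ζ := by rw [hexp, Real.sq_sqrt (norm_nonneg ζ), Complex.norm_mul_exp_arg_mul_I]

section Barrier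

variable {γ : ℝ}

lemma I_mul_ofReal_ne_zero (hγ : γ ≠ 0) : Complex.I * γ ≠ 0 :=
  mul_ne_zero Complex.I_ne_zero (Complex.ofReal_ne_zero.mpr hγ)

lemma hfun_ne_zero (hγ : γ ≠ 0) (w : ℂ) : hfun γ w ≠ 0 := by
  have hc := I_mul_ofReal_ne_zero hγ
  rw [← norm_ne_zero_iff, hfun, norm_sub_div_add_of_sq_eq hc (sqm_sq _)]
  have := sub_ne_zero_of_sq_eq hc (sqm_sq (w ^ 2 + Complex.I * γ))
  positivity

lemma norm_hfun_le (hγ : 0 < γ) (w : ℂ) : ‖hfun γ w‖ ≤ 4 * ‖w‖ ^ 2 / γ + 2 := by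
  have hnorm : ‖Complex.I * γ‖ = γ := by simp [hγ.le]
  rw [hfun, norm_sub_div_add_of_sq_eq (I_mul_ofReal_ne_zero hγ.ne') (sqm_sq _), hnorm,
    div_add' _ _ _ hγ.ne']
  gcongr
  simpa only [hnorm] using norm_sub_sq_le_of_sq_eq (sqm_sq (w ^ 2 + Complex.I * γ))

end Barrier

section FixedPoint

variable {γ R : ℝ} {j : ℤ} {w : ℂ}

lemma re_im_of_eq_Gfun (hR : R ≠ 0) (hfix : w = Gfun γ j R w) :
    w.re * (2 * R) = -Bfun γ j w ∧ w.im * (2 * R) = Afun γ w := by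
  have key : w * (2 * R) = -(Bfun γ j w : ℂ) + Complex.I * Afun γ w := by
    nth_rewrite 1 [hfix]
    rw [Gfun, div_mul_cancel₀ _ (by exact_mod_cast mul_ne_zero two_ne_zero hR)]
  constructor
  · simpa using congrArg Complex.re key
  · simpa using congrArg Complex.im key

lemma im_sq_of_eq_Gfun (hR : R ≠ 0) (hfix : w = Gfun γ j R w) :
    (w ^ 2).im = -(Afun γ w * Bfun γ j w) / (2 * R ^ 2) := by
  obtain ⟨hre, him⟩ := re_im_of_eq_Gfun hR hfix
  rw [sq, Complex.mul_im, eq_div_iff (by positivity)]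
  linear_combination (w.im * (2 * R)) * hre - Bfun γ j w * him

lemma norm_hfun_le_of_eq_Gfun (hγ : 0 < γ) (hR : R ≠ 0) (hfix : w = Gfun γ j R w) :
    ‖hfun γ w‖ ≤ (Afun γ w ^ 2 + Bfun γ j w ^ 2) / (γ * R ^ 2) + 2 := by
  obtain ⟨hre, him⟩ := re_im_of_eq_Gfun hR hfix
  have hnorm : 4 * ‖w‖ ^ 2 / γ = (Afun γ w ^ 2 + Bfun γ j w ^ 2) / (γ * R ^ 2) := by
    rw [div_eq_div_iff hγ.ne' (by positivity), Complex.sq_norm, Complex.normSq_apply]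
    linear_combination
      γ * ((w.re * (2 * R) - Bfun γ j w) * hre + (w.im * (2 * R) + Afun γ w) * him)
  exact hnorm ▸ norm_hfun_le hγ w

lemma im_sq_nonpos_of_mem_Finf (hw : w ∈ Finf) : (w ^ 2).im ≤ 0 := by
  obtain ⟨hre, him, -⟩ := hw
  rw [sq, Complex.mul_im]
  nlinarith

end FixedPoint

lemma pow_four_bounds_of_le {γ R : ℝ} (hγ : 0 < γ)
    (hR : 600 * (γ ^ ((3 : ℝ) / 4) + γ ^ (-(3 : ℝ) / 4)) ≤ R) :
    600 ^ 4 * γ ^ 3 ≤ R ^ 4 ∧ 600 ^ 4 ≤ γ ^ 3 * R ^ 4 := by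
  have hpow (e : ℝ) : (γ ^ (e / 4)) ^ 4 = γ ^ e := by
    rw [← Real.rpow_natCast, ← Real.rpow_mul hγ.le]; norm_num
  have hγ3 : (γ ^ (-(3 : ℝ) / 4)) ^ 4 = (γ ^ 3)⁻¹ := by
    rw [hpow, Real.rpow_neg hγ.le]; norm_cast
  have hγ3' : (γ ^ ((3 : ℝ) / 4)) ^ 4 = γ ^ 3 := by rw [hpow]; norm_cast
  have hpos := Real.rpow_pos_of_pos hγ ((3 : ℝ) / 4)
  have hpos' := Real.rpow_pos_of_pos hγ (-(3 : ℝ) / 4)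
  constructor
  · calc 600 ^ 4 * γ ^ 3 = (600 * γ ^ ((3 : ℝ) / 4)) ^ 4 := by rw [mul_pow, hγ3']
      _ ≤ R ^ 4 := by gcongr; linarith
  · have h : (600 * γ ^ (-(3 : ℝ) / 4)) ^ 4 ≤ R ^ 4 := by gcongr; linarith
    rw [mul_pow, hγ3, ← div_eq_mul_inv, div_le_iff₀ (by positivity)] at h
    linarith

lemma barrier_scale_bounds {γ R : ℝ} (hγ : 0 < γ)
    (hR : 600 * (γ ^ ((3 : ℝ) / 4) + γ ^ (-(3 : ℝ) / 4)) ≤ R) :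
    0 < R ∧ 600 ^ 2 ≤ γ * R ^ 2 ∧ 1 ≤ Real.log R ∧ Real.log (γ * R ^ 2) ≤ 4 * Real.log R ∧
      Real.log R ≤ γ * R ^ 2 / 200 := by
  obtain ⟨hRγ, hγR⟩ := pow_four_bounds_of_le hγ hR
  have hγ3 : 0 < γ ^ 3 := by positivity
  have hR0 : 0 < R := lt_of_lt_of_le (by positivity) hR
  have hR600 : 600 ≤ R := by
    refine le_of_pow_le_pow_left₀ (n := 8) (by norm_num) hR0.le ?_
    nlinarith [mul_le_mul_of_nonneg_right hRγ (by positivity : (0 : ℝ) ≤ R ^ 4)]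
  set X := γ * R ^ 2 with hXdef
  have hX3 : X ^ 3 = γ ^ 3 * R ^ 4 * R ^ 2 := by rw [hXdef]; ring
  have hX : 600 ^ 2 ≤ X := by
    refine le_of_pow_le_pow_left₀ (n := 3) (by norm_num) (by positivity) ?_
    rw [hX3]
    nlinarith [pow_le_pow_left₀ (by norm_num) hR600 2]
  have hXR : X ≤ R ^ 4 := by
    refine le_of_pow_le_pow_left₀ (n := 3) (by norm_num) (by positivity) ?_
    calc X ^ 3 = γ ^ 3 * R ^ 6 := by rw [hXdef]; ring
      _ ≤ R ^ 4 * R ^ 6 := by gcongr; linarith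
      _ ≤ (R ^ 4) ^ 3 := by
        rw [← pow_add, ← pow_mul]; exact pow_le_pow_right₀ (by linarith) (by norm_num)
  have hRX : R ^ 2 ≤ X ^ 3 := by rw [hX3]; nlinarith
  have hX0 : 0 < X := by positivity
  have hL : 1 ≤ Real.log R := by
    rw [Real.le_log_iff_exp_le hR0]
    linarith [Real.exp_one_lt_d9]
  have hlogX : Real.log X ≤ 4 * Real.log R := by
    calc Real.log X ≤ Real.log (R ^ 4) := Real.log_le_log hX0 hXR
      _ = 4 * Real.log R := by rw [Real.log_pow]; norm_num
  have hlogR : 2 * Real.log R ≤ 3 * Real.log X := by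
    have h := Real.log_le_log (by positivity) hRX
    rwa [Real.log_pow, Real.log_pow] at h
  have hlogX_lin := log_le_two_mul_div (by norm_num : (0 : ℝ) < 600) hX
  exact ⟨hR0, hX, hL, hlogX, by linarith⟩

lemma two_pi_mul_le_of_le_floor {j : ℤ} {y : ℝ} (h : j ≤ ⌊1 / (32 * Real.pi) * y⌋) :
    2 * Real.pi * j ≤ y / 16 := by
  have hj : (j : ℝ) ≤ 1 / (32 * Real.pi) * y := (Int.cast_le.mpr h).trans (Int.floor_le _)
  calc 2 * Real.pi * j ≤ 2 * Real.pi * (1 / (32 * Real.pi) * y) := by gcongr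
    _ = y / 16 := by field_simp; ring

lemma mul_le_of_le_log {a b X L : ℝ} (hX : 600 ^ 2 ≤ X) (hL : 1 ≤ L)
    (hXL : Real.log X ≤ 4 * L) (hLX : L ≤ X / 200) (ha : 0 ≤ a) (hab : 2 * a ≤ b)
    (hb : b ≤ Real.pi + X / L / 16) (ha_log : a ≤ Real.log ((a ^ 2 + b ^ 2) / X + 2)) :
    a * b ≤ X := by
  have hX0 : 0 < X := by linarith
  have hπ := Real.pi_le_four
  have hb' : b ≤ 4 + X / 16 := by
    have : X / L ≤ X := div_le_self hX0.le hL
    linarith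
  have hlog_arg : (a ^ 2 + b ^ 2) / X + 2 ≤ X := by
    rw [div_add' _ _ _ hX0.ne', div_le_iff₀ hX0]
    nlinarith
  have ha4 : a ≤ 4 * L :=
    ha_log.trans <| (Real.log_le_log (by positivity) hlog_arg).trans hXL
  calc a * b ≤ 4 * L * b := by gcongr; linarith
    _ ≤ 4 * L * (Real.pi + X / L / 16) := by gcongr
    _ = 4 * Real.pi * L + X / 4 := by field_simp; ring
    _ ≤ X := by nlinarith

lemma Afun_mul_Bfun_le {γ R : ℝ} {j : ℤ} {w : ℂ} (hγ : 0 < γ)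
    (hR : 600 * (γ ^ ((3 : ℝ) / 4) + γ ^ (-(3 : ℝ) / 4)) ≤ R)
    (hjM : j ≤ ⌊(1 / (32 * Real.pi)) * (γ * R ^ 2 / Real.log R)⌋)
    (hw : w ∈ Fj γ j) (hfix : w = Gfun γ j R w) :
    Afun γ w * Bfun γ j w ≤ γ * R ^ 2 := by
  obtain ⟨hR0, hX, hL, hXL, hLX⟩ := barrier_scale_bounds hγ hR
  obtain ⟨⟨-, him, -⟩, hAB⟩ := hw
  obtain ⟨-, hA⟩ := re_im_of_eq_Gfun hR0.ne' hfix
  have hA0 : 0 ≤ Afun γ w := hA ▸ mul_nonneg him (by positivity)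
  have h2AB : 2 * Afun γ w ≤ Bfun γ j w :=
    (mul_le_mul_of_nonneg_left (le_abs_self _) zero_le_two).trans hAB
  have hB : Bfun γ j w ≤ Real.pi + γ * R ^ 2 / Real.log R / 16 :=
    (Bfun_le γ j w).trans (by linarith [two_pi_mul_le_of_le_floor hjM])
  have hA_log : Afun γ w ≤ Real.log ((Afun γ w ^ 2 + Bfun γ j w ^ 2) / (γ * R ^ 2) + 2) :=
    Real.log_le_log (norm_pos_iff.mpr (hfun_ne_zero hγ.ne' w))
      (norm_hfun_le_of_eq_Gfun hγ hR0.ne' hfix)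
  exact mul_le_of_le_log hX hL hXL hLX hA0 h2AB hB hA_log

theorem fixed_point_imaginary_part_bound_general
    (γ R : ℝ) (hγ : 0 < γ)
    (hR : 600 * (γ ^ ((3 : ℝ) / 4) + γ ^ (-(3 : ℝ) / 4)) ≤ R)
    (j : ℤ)
    (hjM : j ≤ ⌊(1 / (32 * Real.pi)) * (γ * R ^ 2 / Real.log R)⌋)
    (w : ℂ) (hw : w ∈ Fj γ j) (hfix : w = Gfun γ j R w) :
    (-γ / 2 ≤ (w ^ 2).im ∧ (w ^ 2).im ≤ 0) ∧
    (γ / 2 ≤ (w ^ 2 + Complex.I * γ).im ∧ (w ^ 2 + Complex.I * γ).im ≤ γ) ∧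
    0 < (w ^ 2 + Complex.I * γ).im := by
  have hR0 : 0 < R := (barrier_scale_bounds hγ hR).1
  have hAB := Afun_mul_Bfun_le hγ hR hjM hw hfix
  have hlower : -γ / 2 ≤ (w ^ 2).im := by
    rw [im_sq_of_eq_Gfun hR0.ne' hfix, le_div_iff₀ (by positivity)]
    linarith
  have hupper := im_sq_nonpos_of_mem_Finf hw.1
  have hshift : (w ^ 2 + Complex.I * γ).im = (w ^ 2).im + γ := by simp
  rw [hshift]
  exact ⟨⟨hlower, hupper⟩, ⟨by linarith, by linarith⟩, by linarith⟩

/-- For `R ≥ 600(γ^{3/4} + γ^{−3/4})` and `1 ≤ j ≤ M_R = ⌊γR²/(32π·log R)⌋`, a solution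
`w ∈ F_j` of `w = G_{j,R}(w)` satisfies `−γ/2 ≤ Im(w²) ≤ 0`; equivalently
`γ/2 ≤ Im(w² + iγ) ≤ γ`, so `w² + iγ` lies in the open upper half-plane. -/
theorem fixed_point_imaginary_part_bound
    (γ R : ℝ) (hγ : 0 < γ)
    (hR : 600 * (γ ^ ((3 : ℝ) / 4) + γ ^ (-(3 : ℝ) / 4)) ≤ R)
    (j : ℤ) (hj : 1 ≤ j)
    (hjM : j ≤ ⌊(1 / (32 * Real.pi)) * (γ * R ^ 2 / Real.log R)⌋)
    (w : ℂ) (hw : w ∈ Fj γ j) (hfix : w = Gfun γ j R w) :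
    (-γ / 2 ≤ (w ^ 2).im ∧ (w ^ 2).im ≤ 0) ∧
    (γ / 2 ≤ (w ^ 2 + Complex.I * γ).im ∧ (w ^ 2 + Complex.I * γ).im ≤ γ) ∧
    0 < (w ^ 2 + Complex.I * γ).im :=
  fixed_point_imaginary_part_bound_general γ R hγ hR j hjM w hw hfix
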